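/- arXiv:2202.08866 — 3 statements merged into one kernel-verified Lean document; each statement's English description precedes it below -/
import Mathlib

section
/- Let A be a based quasi-hereditary superalgebra over a commutative ring k with heredity data (I,X,Y), let i∈I, let V be a nonzero finitely generated A-supermodule and let v∈V be a homogeneous vector. If e_i v = v, Av = V, and yv = 0 for all y ∈ Y∖{e_i}, then V is a highest weight module of weight i (with highest weight vector v). -/
/-!
STATEMENT 1: highest weight criterion for based quasi-hereditary superalgebras.
-/

open scoped Classical

/-- Heredity data `(I, X, Y)` on a `ℤ/2`-graded `k`-superalgebra `A` (with grading `𝒜`),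
making `A` a based quasi-hereditary superalgebra (Kleshchev–Muth).  The sets `X i`, `Y i`
consist of homogeneous elements, with distinguished initial elements `e i ∈ X i ∩ Y i`;
`B = {x * y | i ∈ I, x ∈ X i, y ∈ Y i}` is a `k`-basis of `A`; left/right multiplication is
triangular modulo `A^{> i} = span {x * y | j > i, x ∈ X j, y ∈ Y j}`; and the idempotent
axioms (c) hold. -/
structure HeredityData (k A : Type) [CommRing k] [Ring A] [Algebra k A]
    (𝒜 : ZMod 2 → Submodule k A)
    (I : Type) [Fintype I] [PartialOrder I] : Type where
  X : I → Finset A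
  Y : I → Finset A
  e : I → A
  e_mem_X : ∀ i, e i ∈ X i
  e_mem_Y : ∀ i, e i ∈ Y i
  homog_X : ∀ i, ∀ x ∈ X i, ∃ ε : ZMod 2, x ∈ 𝒜 ε
  homog_Y : ∀ i, ∀ y ∈ Y i, ∃ ε : ZMod 2, y ∈ 𝒜 ε
  /-- (a): the products `x * y` form a `k`-basis of `A`: they are linearly independent … -/
  basis_indep : LinearIndependent k
    (fun p : Σ i : I, {q : A × A // q ∈ X i ×ˢ Y i} => p.2.1.1 * p.2.1.2)
  /-- (a): … and they span `A`. -/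
  basis_span :
    Submodule.span k {a : A | ∃ i, ∃ x ∈ X i, ∃ y ∈ Y i, a = x * y} = ⊤
  /-- (b): `a * x` is, modulo `A^{> i}`, a `k`-linear combination of elements of `X i`. -/
  left_coeffs : ∀ i, ∀ x ∈ X i, ∀ a : A,
    a * x ∈ Submodule.span k ((X i : Set A) ∪
      {b : A | ∃ j, i < j ∧ ∃ x' ∈ X j, ∃ y' ∈ Y j, b = x' * y'})
  /-- (b): `y * a` is, modulo `A^{> i}`, a `k`-linear combination of elements of `Y i`. -/
  right_coeffs : ∀ i, ∀ y ∈ Y i, ∀ a : A,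
    y * a ∈ Submodule.span k ((Y i : Set A) ∪
      {b : A | ∃ j, i < j ∧ ∃ x' ∈ X j, ∃ y' ∈ Y j, b = x' * y'})
  /-- (c): `x * e i = x`. -/
  x_mul_e : ∀ i, ∀ x ∈ X i, x * e i = x
  /-- (c): `e i * x = δ_{x, e i} x`. -/
  e_mul_x : ∀ i, ∀ x ∈ X i, e i * x = if x = e i then x else 0
  /-- (c): `e i * y = y`. -/
  e_mul_y : ∀ i, ∀ y ∈ Y i, e i * y = y
  /-- (c): `y * e i = δ_{y, e i} y`. -/
  y_mul_e : ∀ i, ∀ y ∈ Y i, y * e i = if y = e i then y else 0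
  /-- (c): `e j * x = x` or `0`. -/
  e_mul_x' : ∀ i j, ∀ x ∈ X i, e j * x = x ∨ e j * x = 0
  /-- (c): `y * e j = y` or `0`. -/
  y_mul_e' : ∀ i j, ∀ y ∈ Y i, y * e j = y ∨ y * e j = 0

/-- Let `A` be a based quasi-hereditary superalgebra over a commutative
ring `k` with heredity data `(I, X, Y)`, `i ∈ I`, `V` a nonzero finitely generated
`A`-supermodule and `v ∈ V` a homogeneous vector with `e i • v = v`, `A v = V` and
`y • v = 0` for all `y ∈ Y ∖ {e i}`.  Then `V` is a highest weight module of weight `i`,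
i.e. there is a homogeneous vector `w` such that `e i • V` is spanned by `w` over `k`,
`A w = V`, and `e j • V = 0` for all `j > i`. -/
theorem stmt1 (k A : Type) [CommRing k] [Ring A] [Algebra k A]
    (𝒜 : ZMod 2 → Submodule k A) [GradedAlgebra 𝒜]
    (I : Type) [Fintype I] [PartialOrder I]
    (H : HeredityData k A 𝒜 I)
    (V : Type) [AddCommGroup V] [Module k V] [Module A V] [IsScalarTower k A V]
    [Nontrivial V] [Module.Finite A V]
    -- the `ℤ/2`-grading of the supermodule `V`, compatible with that of `A`
    (𝒱 : ZMod 2 → Submodule k V) [DirectSum.Decomposition 𝒱]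
    (hact : ∀ (ε δ : ZMod 2) (a : A) (x : V), a ∈ 𝒜 ε → x ∈ 𝒱 δ → a • x ∈ 𝒱 (ε + δ))
    (i : I) (v : V)
    (hv_homog : ∃ ε : ZMod 2, v ∈ 𝒱 ε)
    (h1 : H.e i • v = v)
    (h2 : Submodule.span A {v} = ⊤)
    (h3 : ∀ j, ∀ y ∈ H.Y j, y ≠ H.e i → y • v = 0) :
    ∃ w : V, (∃ ε : ZMod 2, w ∈ 𝒱 ε) ∧
      Submodule.span k (Set.range fun u : V => H.e i • u) = Submodule.span k {w} ∧
      Submodule.span A {w} = ⊤ ∧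
      ∀ j, i < j → ∀ u : V, H.e j • u = 0 := by
    classical
  -- k is nontrivial (since V is a nontrivial k-module)
  have hk : Nontrivial k := by
    rcases subsingleton_or_nontrivial k with hs | hn
    · exfalso
      have hz : ∀ x : V, x = 0 := fun x => by
        rw [← one_smul k x, Subsingleton.elim (1 : k) 0, zero_smul]
      obtain ⟨x, y, hxy⟩ := exists_pair_ne V
      exact hxy ((hz x).trans (hz y).symm)
    · exact hn
  have hinj : Function.Injective
      (fun p : Σ i : I, {q : A × A // q ∈ H.X i ×ˢ H.Y i} => p.2.1.1 * p.2.1.2) :=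
    H.basis_indep.injective
  -- if e i ∈ Y j then j = i
  have keyY : ∀ j, H.e i ∈ H.Y j → j = i := by
    intro j hmem
    have hq1 : (H.e j, H.e i) ∈ H.X j ×ˢ H.Y j :=
      Finset.mem_product.mpr ⟨H.e_mem_X j, hmem⟩
    have hq2 : (H.e i, H.e i) ∈ H.X i ×ˢ H.Y i :=
      Finset.mem_product.mpr ⟨H.e_mem_X i, H.e_mem_Y i⟩
    have hval : H.e j * H.e i = H.e i * H.e i := by
      rw [H.e_mul_y j _ hmem, H.e_mul_y i _ (H.e_mem_Y i)]
    have heq := hinj (a₁ := ⟨j, ⟨(H.e j, H.e i), hq1⟩⟩)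
      (a₂ := ⟨i, ⟨(H.e i, H.e i), hq2⟩⟩) hval
    exact congrArg Sigma.fst heq
  -- elements of Y j for j ≠ i kill v
  have hzero : ∀ j, j ≠ i → ∀ y ∈ H.Y j, y • v = 0 := by
    intro j hji y hy
    by_cases hyi : y = H.e i
    · exact absurd (keyY j (hyi ▸ hy)) hji
    · exact h3 j y hy hyi
  -- the k-linear map a ↦ a • v
  let φ : A →ₗ[k] V :=
    { toFun := fun a => a • v
      map_add' := fun a b => add_smul a b v
      map_smul' := fun c a => smul_assoc c a v }
  have hφ : ∀ a : A, φ a = a • v := fun _ => rfl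
  -- products from strictly bigger strata kill v
  have hbad : ∀ b : A, (∃ j', i < j' ∧ ∃ x' ∈ H.X j', ∃ y' ∈ H.Y j', b = x' * y') →
      b • v = 0 := by
    rintro b ⟨j', hij', x', _hx', y', hy', rfl⟩
    rw [mul_smul, hzero j' (ne_of_gt hij') y' hy', smul_zero]
  -- every element of V is of the form a • v
  have hall : ∀ u : V, ∃ a : A, a • v = u := fun u =>
    Submodule.mem_span_singleton.mp (h2 ▸ Submodule.mem_top)
  refine ⟨v, hv_homog, ?_, h2, ?_⟩
  · -- span k (e i • V) = span k {v}
    apply le_antisymm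
    · rw [Submodule.span_le]
      rintro _ ⟨u, rfl⟩
      obtain ⟨a, rfl⟩ := hall u
      have hmem := H.right_coeffs i (H.e i) (H.e_mem_Y i) a
      have hle : Submodule.span k ((H.Y i : Set A) ∪
          {b : A | ∃ j, i < j ∧ ∃ x' ∈ H.X j, ∃ y' ∈ H.Y j, b = x' * y'}) ≤
          (Submodule.span k {v}).comap φ := by
        rw [Submodule.span_le]
        rintro s (hs | hs)
        · simp only [Set.mem_setOf_eq, SetLike.mem_coe, Submodule.mem_comap, hφ]
          by_cases hsi : s = H.e i
          · subst hsi
            rw [h1]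
            exact Submodule.mem_span_singleton_self v
          · rw [h3 i s hs hsi]
            exact Submodule.zero_mem _
        · simp only [Set.mem_setOf_eq, SetLike.mem_coe, Submodule.mem_comap, hφ]
          rw [hbad s hs]
          exact Submodule.zero_mem _
      have := hle hmem
      rw [Submodule.mem_comap, hφ] at this
      simpa [← mul_smul] using this
    · apply Submodule.span_le.mpr
      rw [Set.singleton_subset_iff]
      exact Submodule.subset_span ⟨v, h1⟩
  · -- e j kills V for j > i
    intro j hij u
    obtain ⟨a, rfl⟩ := hall u
    have hmem := H.right_coeffs j (H.e j) (H.e_mem_Y j) a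
    have hle : Submodule.span k ((H.Y j : Set A) ∪
        {b : A | ∃ j', j < j' ∧ ∃ x' ∈ H.X j', ∃ y' ∈ H.Y j', b = x' * y'}) ≤
        LinearMap.ker φ := by
      rw [Submodule.span_le]
      rintro s (hs | hs)
      · simp only [SetLike.mem_coe, LinearMap.mem_ker, hφ]
        exact hzero j (ne_of_gt hij) s hs
      · obtain ⟨j', hjj', rest⟩ := hs
        simp only [SetLike.mem_coe, LinearMap.mem_ker, hφ]
        exact hbad s ⟨j', lt_trans hij hjj', rest⟩
    have := LinearMap.mem_ker.mp (hle hmem)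
    rw [hφ, mul_smul] at this
    exact this
end

section
/- Let A be a based quasi-hereditary superalgebra over a field F with heredity data (I,X,Y), let i∈I, and let V be a highest weight module of weight i with highest weight vector v. Then there is a surjective homogeneous A-supermodule homomorphism Δ(i) ↠ V of parity |v|; in particular, e_jV ≠ 0 implies j ≤ i. -/
/-!
STATEMENT 2: universality of standard modules over a based quasi-hereditary superalgebra
over a field.
-/

open scoped Classical

variable (F A : Type) [Field F] [Ring A] [Algebra F A]
  (𝒜 : ZMod 2 → Submodule F A)
  (I : Type) [Fintype I] [PartialOrder I]

/-- The (left ideal) `A^{> i}`, generated by the products `x * y` with `x ∈ X j`,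
`y ∈ Y j`, `j > i` (it is in fact a two-sided ideal of `A`). -/
def hgtIdeal (H : HeredityData F A 𝒜 I) (i : I) : Submodule A A :=
  Submodule.span A {b : A | ∃ j, i < j ∧ ∃ x ∈ H.X j, ∃ y ∈ H.Y j, b = x * y}

/-- The quotient superalgebra `Ã = A / A^{> i}` as a left `A`-module. -/
abbrev DeltaQuot (H : HeredityData F A 𝒜 I) (i : I) : Type :=
  A ⧸ hgtIdeal F A 𝒜 I H i

/-- The standard module `Δ(i) = Ã ẽ_i = A · (e i + A^{> i}) ⊆ A / A^{> i}`. -/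
def stdDelta (H : HeredityData F A 𝒜 I) (i : I) :
    Submodule A (DeltaQuot F A 𝒜 I H i) :=
  Submodule.span A {Submodule.Quotient.mk (H.e i)}

/-- The induced `ℤ/2`-grading on the standard module `Δ(i)`:  a vector is in the
`ε`-component iff it is the image of an element of `𝒜 ε`. -/
def grDelta (H : HeredityData F A 𝒜 I) (i : I) (ε : ZMod 2) :
    Set ↥(stdDelta F A 𝒜 I H i) :=
  {q | ∃ a ∈ 𝒜 ε, (Submodule.Quotient.mk a : DeltaQuot F A 𝒜 I H i) = (q : DeltaQuot F A 𝒜 I H i)}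

/-- A homogeneous `A`-supermodule homomorphism of parity `δ`:  an `F`-linear map `f`
shifting the gradings by `δ` and satisfying `f (a • x) = (-1)^{|f||a|} a • f x` for
homogeneous `a`. -/
def IsSuperHom (V W : Type) [AddCommGroup V] [Module F V] [Module A V]
    [AddCommGroup W] [Module F W] [Module A W]
    (gV : ZMod 2 → Set V) (gW : ZMod 2 → Set W) (δ : ZMod 2) (f : V →ₗ[F] W) : Prop :=
  (∀ ε : ZMod 2, ∀ x ∈ gV ε, f x ∈ gW (ε + δ)) ∧
  ∀ ε : ZMod 2, ∀ a ∈ 𝒜 ε, ∀ x : V,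
    f (a • x) = (if ε * δ = 1 then -(a • f x) else a • f x)

/-!
The products `x y` generating `A^{>i}` have `y = e_j y` with `j > i`, so they annihilate `V`;
hence `a ẽ_i ↦ a v` is a well-defined `A`-linear map `Δ(i) → V`. It is onto because `v`
generates `V` and `e_i v = v` (as `v ∈ e_i V`), and it shifts parities by `|v|`. Composing it
with the parity operator `(-1)^{|·|}` of `V` when `|v|` is odd produces the signs
`(-1)^{|a||v|}` of a supermodule homomorphism.

If `e_j V ≠ 0`, then `e_j Δ(i) ≠ 0`, so by (b) and (c) some `x ∈ X(i)` has `e_j x = x`.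
Expanding `e_j x` by (b) in the basis `B` only involves basis elements of weight `≥ j`, while
`x = x e_i` is itself a basis element of weight `i`; hence `j ≤ i`.
-/

theorem IsIdempotentElem.smul_eq_self_of_mem_span_range {R S M : Type} [Semiring R] [Monoid S]
    [AddCommMonoid M] [Module R M] [DistribMulAction S M] [SMulCommClass S R M] {e : S}
    (he : IsIdempotentElem e) {m : M}
    (hm : m ∈ Submodule.span R (Set.range (e • · : M → M))) : e • m = m := by
  induction hm using Submodule.span_induction with
  | mem _ hx =>
    obtain ⟨u, rfl⟩ := hx
    rw [smul_smul, he]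
  | zero => exact smul_zero e
  | add x y _ _ hx hy => rw [smul_add, hx, hy]
  | smul t x _ hx => rw [smul_comm, hx]

theorem ZMod.eq_zero_or_eq_one (ε : ZMod 2) : ε = 0 ∨ ε = 1 := by
  revert ε; decide

section ParityOperator

variable {R M : Type} [Ring R] [AddCommGroup M] [Module R M]
  (ℳ : ZMod 2 → Submodule R M) [DirectSum.Decomposition ℳ]

def parityOperator : M →ₗ[R] M :=
  let π (ε : ZMod 2) : M →ₗ[R] M := (ℳ ε).subtype ∘ₗ
    DirectSum.component R (ZMod 2) (fun ε => ℳ ε) ε ∘ₗ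
      (DirectSum.decomposeLinearEquiv ℳ).toLinearMap
  π 0 - π 1

variable {ℳ}

theorem parityOperator_of_mem {δ : ZMod 2} {m : M} (hm : m ∈ ℳ δ) :
    parityOperator ℳ m = if δ = 1 then -m else m := by
  show (DirectSum.decompose ℳ m 0 : M) - DirectSum.decompose ℳ m 1 = _
  obtain rfl | rfl := ZMod.eq_zero_or_eq_one δ <;>
    simp [DirectSum.decompose_of_mem_same ℳ hm, DirectSum.decompose_of_mem_ne ℳ hm]

theorem parityOperator_involutive : Function.Involutive (parityOperator ℳ) := by
  intro m
  induction m using DirectSum.Decomposition.inductionOn ℳ with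
  | zero => simp
  | homogeneous m =>
    rw [parityOperator_of_mem m.2]
    split_ifs <;> simp [parityOperator_of_mem m.2, *]
  | add m m' hm hm' => rw [map_add, map_add, hm, hm']

theorem parityOperator_smul {S : Type} [Monoid S] [DistribMulAction S M] {ε : ZMod 2} {s : S}
    (hs : ∀ δ, ∀ m ∈ ℳ δ, s • m ∈ ℳ (ε + δ)) (m : M) :
    parityOperator ℳ (s • m) =
      if ε = 1 then -(s • parityOperator ℳ m) else s • parityOperator ℳ m := by
  induction m using DirectSum.Decomposition.inductionOn ℳ with
  | zero => simp
  | @homogeneous δ m =>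
    rw [parityOperator_of_mem (hs δ m m.2), parityOperator_of_mem m.2]
    obtain rfl | rfl := ZMod.eq_zero_or_eq_one ε
    all_goals obtain rfl | rfl := ZMod.eq_zero_or_eq_one δ
    all_goals simp
  | add m m' hm hm' =>
    rw [smul_add, map_add, hm, hm', map_add, smul_add]
    split_ifs <;> abel

def parityTwist (ℳ : ZMod 2 → Submodule R M) [DirectSum.Decomposition ℳ] (δ : ZMod 2) :
    M →ₗ[R] M :=
  if δ = 1 then parityOperator ℳ else LinearMap.id

theorem parityTwist_bijective (δ : ZMod 2) : Function.Bijective (parityTwist ℳ δ) := by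
  unfold parityTwist
  split_ifs
  exacts [parityOperator_involutive.bijective, Function.bijective_id]

theorem parityTwist_mem (δ : ZMod 2) {ε : ZMod 2} {m : M} (hm : m ∈ ℳ ε) :
    parityTwist ℳ δ m ∈ ℳ ε := by
  unfold parityTwist
  split_ifs
  · rw [parityOperator_of_mem hm]
    split_ifs
    exacts [neg_mem hm, hm]
  · exact hm

theorem parityTwist_smul {S : Type} [Monoid S] [DistribMulAction S M] (δ : ZMod 2) {ε : ZMod 2}
    {s : S} (hs : ∀ δ, ∀ m ∈ ℳ δ, s • m ∈ ℳ (ε + δ)) (m : M) :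
    parityTwist ℳ δ (s • m) =
      if ε * δ = 1 then -(s • parityTwist ℳ δ m) else s • parityTwist ℳ δ m := by
  unfold parityTwist
  obtain rfl | rfl := ZMod.eq_zero_or_eq_one δ
  · simp
  · simpa using parityOperator_smul hs m

end ParityOperator

section SuperHom

variable {F A 𝒜}

theorem isSuperHom_parityTwist_comp {V W : Type} [AddCommGroup V] [Module F V] [Module A V]
    [IsScalarTower F A V] [AddCommGroup W] [Module F W] [Module A W] [IsScalarTower F A W]
    {𝒱 : ZMod 2 → Submodule F V} [DirectSum.Decomposition 𝒱]
    (hact : ∀ (ε δ : ZMod 2) (a : A) (x : V), a ∈ 𝒜 ε → x ∈ 𝒱 δ →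
      a • x ∈ 𝒱 (ε + δ))
    {gW : ZMod 2 → Set W} {δ : ZMod 2} (g : W →ₗ[A] V)
    (hg : ∀ ε, ∀ w ∈ gW ε, g w ∈ 𝒱 (ε + δ)) :
    IsSuperHom F A 𝒜 W V gW (fun ε => (𝒱 ε : Set V)) δ
      (parityTwist 𝒱 δ ∘ₗ g.restrictScalars F) :=
  ⟨fun ε w hw => parityTwist_mem δ (hg ε w hw), fun ε a ha w => by
    simpa using parityTwist_smul δ (fun δ' m hm => hact ε δ' a m ha hm) (g w)⟩

end SuperHom

namespace HeredityData

variable {k R : Type} [CommRing k] [Ring R] [Algebra k R] {ℛ : ZMod 2 → Submodule k R}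
  {J : Type} [Fintype J] [PartialOrder J] (H : HeredityData k R ℛ J)

theorem isIdempotentElem_e (i : J) : IsIdempotentElem (H.e i) :=
  (H.e_mul_x i (H.e i) (H.e_mem_X i)).trans (if_pos rfl)

theorem le_of_e_mul_eq_self [Nontrivial k] {i j : J} {x : R} (hx : x ∈ H.X i)
    (hjx : H.e j * x = x) : j ≤ i := by
  let b := fun p : Σ i : J, {q : R × R // q ∈ H.X i ×ˢ H.Y i} => p.2.1.1 * p.2.1.2
  have hbx : b ⟨i, (x, H.e i), Finset.mem_product.2 ⟨hx, H.e_mem_Y i⟩⟩ = x :=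
    H.x_mul_e i x hx
  have hspan : x ∈ Submodule.span k (b '' {p | j ≤ p.1}) := by
    rw [← hjx]
    refine Submodule.span_mono ?_ (H.right_coeffs j (H.e j) (H.e_mem_Y j) x)
    rintro y (hy | ⟨j', hjj', x', hx', y', hy', rfl⟩)
    · exact ⟨⟨j, (H.e j, y), Finset.mem_product.2 ⟨H.e_mem_X j, hy⟩⟩, le_rfl,
        H.e_mul_y j y hy⟩
    · exact ⟨⟨j', (x', y'), Finset.mem_product.2 ⟨hx', hy'⟩⟩, hjj'.le, rfl⟩
  by_contra hji
  exact H.basis_indep.notMem_span_image (s := {p | j ≤ p.1}) hji (hbx ▸ hspan)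

end HeredityData

section StandardModule

variable {F A 𝒜 I} (H : HeredityData F A 𝒜 I) (i : I)

theorem hgtIdeal_le_annihilator {V : Type} [AddCommGroup V] [Module A V]
    (hhigh : ∀ j, i < j → ∀ u : V, H.e j • u = 0) :
    hgtIdeal F A 𝒜 I H i ≤ Module.annihilator A V := by
  refine Submodule.span_le.2 ?_
  rintro _ ⟨j, hij, x, -, y, hy, rfl⟩
  refine Module.mem_annihilator.2 fun u => ?_
  rw [← H.e_mul_y j y hy, mul_smul, mul_smul, hhigh j hij, smul_zero]

theorem le_of_e_smul_stdDelta_ne_zero {j : I} {d : stdDelta F A 𝒜 I H i}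
    (hd : H.e j • d ≠ 0) : j ≤ i := by
  suffices ∃ x ∈ H.X i, H.e j * x = x by
    obtain ⟨x, hx, hjx⟩ := this
    exact H.le_of_e_mul_eq_self hx hjx
  by_contra! hX
  obtain ⟨a, ha⟩ := Submodule.mem_span_singleton.1 d.2
  let L : A →ₗ[F] DeltaQuot F A 𝒜 I H i :=
    (hgtIdeal F A 𝒜 I H i).mkQ.restrictScalars F ∘ₗ LinearMap.mulLeft F (H.e j)
  have hL : Submodule.span F ((H.X i : Set A) ∪
      {b | ∃ j, i < j ∧ ∃ x ∈ H.X j, ∃ y ∈ H.Y j, b = x * y}) ≤ LinearMap.ker L := by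
    refine Submodule.span_le.2 ?_
    rintro b (hb | hb) <;> simp only [SetLike.mem_coe, LinearMap.mem_ker]
    · simp [L, (H.e_mul_x' i j b hb).resolve_left (hX b hb)]
    · simpa [L] using (hgtIdeal F A 𝒜 I H i).smul_mem (H.e j) (Submodule.subset_span hb)
  have hmem : H.e j * (a * H.e i) ∈ hgtIdeal F A 𝒜 I H i := by
    simpa [L] using hL (H.left_coeffs i (H.e i) (H.e_mem_X i) a)
  apply hd
  ext
  rw [Submodule.coe_smul, ← ha, ← Submodule.Quotient.mk_smul, ← Submodule.Quotient.mk_smul,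
    smul_eq_mul, smul_eq_mul, ZeroMemClass.coe_zero, Submodule.Quotient.mk_eq_zero]
  exact hmem

variable {V : Type} [AddCommGroup V] [Module A V] (v : V)
  (hann : hgtIdeal F A 𝒜 I H i ≤ Module.annihilator A V)

def stdDeltaLift : stdDelta F A 𝒜 I H i →ₗ[A] V :=
  (hgtIdeal F A 𝒜 I H i).liftQ (LinearMap.toSpanSingleton A V v)
    (fun _ ha => Module.mem_annihilator.1 (hann ha) v) ∘ₗ (stdDelta F A 𝒜 I H i).subtype

variable {H i v hann}

theorem stdDeltaLift_apply {d : stdDelta F A 𝒜 I H i} {a : A}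
    (had : Submodule.Quotient.mk a = (d : DeltaQuot F A 𝒜 I H i)) :
    stdDeltaLift H i v hann d = a • v := by
  rw [stdDeltaLift, LinearMap.comp_apply, Submodule.subtype_apply, ← had]
  rfl

theorem stdDeltaLift_surjective (hev : H.e i • v = v) (hgen : Submodule.span A {v} = ⊤) :
    Function.Surjective (stdDeltaLift H i v hann) := by
  rw [← LinearMap.range_eq_top, eq_top_iff, ← hgen, Submodule.span_le, Set.singleton_subset_iff]
  exact ⟨⟨_, Submodule.mem_span_singleton_self _⟩, (stdDeltaLift_apply rfl).trans hev⟩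

theorem stdDeltaLift_mem_of_mem_grDelta [Module F V] {𝒱 : ZMod 2 → Submodule F V}
    {pv : ZMod 2} (hv : ∀ ε, ∀ a ∈ 𝒜 ε, a • v ∈ 𝒱 (ε + pv)) :
    ∀ ε, ∀ d ∈ grDelta F A 𝒜 I H i ε, stdDeltaLift H i v hann d ∈ 𝒱 (ε + pv) := by
  rintro ε d ⟨a, ha, had⟩
  rw [stdDeltaLift_apply had]
  exact hv ε a ha

end StandardModule

theorem stmt2
    (H : HeredityData F A 𝒜 I)
    (V : Type) [AddCommGroup V] [Module F V] [Module A V] [IsScalarTower F A V]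
    (𝒱 : ZMod 2 → Submodule F V) [DirectSum.Decomposition 𝒱]
    (hact : ∀ (ε δ : ZMod 2) (a : A) (x : V), a ∈ 𝒜 ε → x ∈ 𝒱 δ → a • x ∈ 𝒱 (ε + δ))
    (i : I) (v : V) (pv : ZMod 2) (hv : v ∈ 𝒱 pv)
    -- `V` is a highest weight module of weight `i` with highest weight vector `v`:
    (hspan : Submodule.span F (Set.range fun u : V => H.e i • u) = Submodule.span F {v})
    (hgen : Submodule.span A {v} = ⊤)
    (hhigh : ∀ j, i < j → ∀ u : V, H.e j • u = 0) :
    (∃ f : ↥(stdDelta F A 𝒜 I H i) →ₗ[F] V, Function.Surjective f ∧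
      IsSuperHom F A 𝒜 ↥(stdDelta F A 𝒜 I H i) V
        (grDelta F A 𝒜 I H i) (fun ε => (𝒱 ε : Set V)) pv f) ∧
    ∀ j, (∃ u : V, H.e j • u ≠ 0) → j ≤ i := by
  have hann := hgtIdeal_le_annihilator H i hhigh
  have hev : H.e i • v = v := (H.isIdempotentElem_e i).smul_eq_self_of_mem_span_range
    (hspan ▸ Submodule.mem_span_singleton_self v)
  have hsurj := stdDeltaLift_surjective (hann := hann) hev hgen
  refine ⟨⟨_, (parityTwist_bijective pv).surjective.comp hsurj,
    isSuperHom_parityTwist_comp hact (stdDeltaLift H i v hann)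
      (stdDeltaLift_mem_of_mem_grDelta fun ε a ha => hact ε pv a v ha hv)⟩, ?_⟩
  rintro j ⟨u, hu⟩
  obtain ⟨d, rfl⟩ := hsurj u
  exact le_of_e_smul_stdDelta_ne_zero H i fun hd => hu (by rw [← map_smul, hd, map_zero])
end

section
/- Let λ be a partition of d with at most n parts, c ≥ 0 an integer, Ω := {P ⊆ [n] : |P| = c}, Σ_λ := {σ ∈ Σ_n : σλ = λ} the stabilizer of λ (acting on compositions by σλ = (λ_{σ^{-1}1},…,λ_{σ^{-1}n})), and Ω_λ := {P ∈ Ω : λ + ε_P is a partition}, where ε_P := Σ_{p∈P} ε_p with ε_p the p-th unit vector. Writing Ω_λ = {P_1 < P_2 < ⋯ < P_t} in the lexicographic order on c-subsets (comparing increasing lists of elements), then: (i) each P_r is the lexicographically minimal element of its Σ_λ-orbit; (ii) Ω is the disjoint union of the orbits Σ_λ·P_1, …, Σ_λ·P_t. -/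
/-!
Adding `ε_P` to a partition `λ` gives a partition exactly when `P` meets every level set of `λ`
in an initial segment. The stabiliser `Σ_λ` permutes each level set, so it preserves the number
of elements of `P` in each of them. Hence if `σP ≠ P`, the least element where `P` and `σP`
differ lies in `P` (otherwise `σP` would have one element too many in its level set), which is
(i); and by (i) no two such `P` share an orbit. Every orbit contains one: an element of the
orbit with least sum of entries admits no swap inside a level set that lowers it.
-/

open scoped Classical

/-- `σλ = (λ_{σ⁻¹ 1}, …, λ_{σ⁻¹ n})`: the place-permutation action of `Σ_n` on
compositions with `n` parts. -/
def permAct {n : ℕ} (σ : Equiv.Perm (Fin n)) (lam : Fin n → ℕ) : Fin n → ℕ :=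
  fun r => lam (σ⁻¹ r)

/-- `λ` is a partition (with at most `n` parts): its parts weakly decrease. -/
def IsPtn {n : ℕ} (lam : Fin n → ℕ) : Prop :=
  ∀ r s : Fin n, r ≤ s → lam s ≤ lam r

/-- `ε_P = Σ_{p ∈ P} ε_p`: the indicator vector of a subset `P ⊆ [n]`. -/
def epsOf {n : ℕ} (P : Finset (Fin n)) : Fin n → ℕ :=
  fun r => if r ∈ P then 1 else 0

/-- The lexicographic (total) order on `c`-element subsets of `[n]`:
`P < Q` iff the increasing list of elements of `P` is lexicographically smaller than
that of `Q`. -/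
def OmLt {n : ℕ} (P Q : Finset (Fin n)) : Prop :=
  List.Lex (· < ·) (P.sort (· ≤ ·)) (Q.sort (· ≤ ·))

open Finset

theorem List.lex_lt_of_mem_of_notMem {α : Type*} [LinearOrder α] {l₁ l₂ : List α}
    (h₁ : l₁.Pairwise (· < ·)) (h₂ : l₂.Pairwise (· < ·)) (hlen : l₁.length = l₂.length)
    {m : α} (hm₁ : m ∈ l₁) (hm₂ : m ∉ l₂) (hbelow : ∀ x < m, x ∈ l₁ ↔ x ∈ l₂) :
    List.Lex (· < ·) l₁ l₂ := by
  induction l₁ generalizing l₂ with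
  | nil => simp at hm₁
  | cons a l₁ ih =>
    obtain _ | ⟨b, l₂⟩ := l₂
    · simp at hlen
    have ha_le : a ≤ m :=
      (List.mem_cons.mp hm₁).elim ge_of_eq fun h => (List.rel_of_pairwise_cons h₁ h).le
    rcases lt_trichotomy a b with hab | rfl | hba
    · exact .rel hab
    · have ha₁ : a ∉ l₁ := fun h => lt_irrefl a (List.rel_of_pairwise_cons h₁ h)
      have ha₂ : a ∉ l₂ := fun h => lt_irrefl a (List.rel_of_pairwise_cons h₂ h)
      have hma : m ≠ a := by rintro rfl; simp at hm₂
      refine .cons (ih h₁.of_cons h₂.of_cons (by simpa using hlen) ?_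
        (fun h => hm₂ (List.mem_cons_of_mem _ h)) fun x hx => ?_)
      · simpa [hma] using hm₁
      · by_cases hxa : x = a
        · subst hxa; simp [ha₁, ha₂]
        · simpa [hxa] using hbelow x hx
    · have hb : b ∈ a :: l₁ := (hbelow b (hba.trans_le ha_le)).mpr (by simp)
      rcases List.mem_cons.mp hb with h | h
      · exact absurd h hba.ne
      · exact absurd (List.rel_of_pairwise_cons h₁ h) (not_lt.mpr hba.le)

def IsFiberwiseLowerSet {n : ℕ} (lam : Fin n → ℕ) (P : Finset (Fin n)) : Prop :=
  ∀ r s : Fin n, r ≤ s → lam r = lam s → s ∈ P → r ∈ P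

def levelStabilizer {n : ℕ} (lam : Fin n → ℕ) : Subgroup (Equiv.Perm (Fin n)) where
  carrier := {σ | ∀ x, lam (σ x) = lam x}
  mul_mem' {a b} ha hb x := (ha (b x)).trans (hb x)
  one_mem' _ := rfl
  inv_mem' {σ} hσ x := by simpa using (hσ (σ⁻¹ x)).symm

section
variable {n : ℕ} {lam : Fin n → ℕ} {P Q : Finset (Fin n)} {σ : Equiv.Perm (Fin n)}

lemma mem_levelStabilizer : σ ∈ levelStabilizer lam ↔ ∀ x, lam (σ x) = lam x := Iff.rfl

lemma permAct_eq_self_iff : permAct σ lam = lam ↔ σ ∈ levelStabilizer lam := by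
  simp only [permAct, funext_iff, mem_levelStabilizer]
  exact ⟨fun h x => by simpa using (h (σ x)).symm,
    fun h r => by simpa using (h (σ⁻¹ r)).symm⟩

lemma isFiberwiseLowerSet_of_isPtn_add_epsOf (h : IsPtn fun r => lam r + epsOf P r) :
    IsFiberwiseLowerSet lam P := by
  intro r s hrs hv hs
  by_contra hr
  have hle := h r s hrs
  simp only [epsOf, if_pos hs, if_neg hr] at hle
  omega

lemma IsPtn.add_epsOf (hlam : IsPtn lam) (hP : IsFiberwiseLowerSet lam P) :
    IsPtn fun r => lam r + epsOf P r := by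
  intro r s hrs
  have hle := hlam r s hrs
  have hlt : s ∈ P → r ∉ P → lam s < lam r := fun hs hr =>
    hle.lt_of_ne fun hv => hr (hP r s hrs hv.symm hs)
  show lam s + epsOf P s ≤ lam r + epsOf P r
  unfold epsOf
  split_ifs <;> grind

lemma card_filter_image_levelStabilizer (hσ : σ ∈ levelStabilizer lam) (S : Finset (Fin n))
    (v : ℕ) : #((S.image σ).filter (lam · = v)) = #(S.filter (lam · = v)) := by
  rw [filter_image, card_image_of_injective _ σ.injective]
  simp only [mem_levelStabilizer.1 hσ]

lemma omLt_of_mem_of_notMem (hcard : #P = #Q) {m : Fin n} (hmP : m ∈ P) (hmQ : m ∉ Q)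
    (hbelow : ∀ x < m, x ∈ P ↔ x ∈ Q) : OmLt P Q :=
  List.lex_lt_of_mem_of_notMem P.sortedLT_sort.pairwise Q.sortedLT_sort.pairwise
    (by simpa using hcard) (by simpa using hmP) (by simpa using hmQ) (by simpa using hbelow)

theorem omLt_image_of_isFiberwiseLowerSet (hP : IsFiberwiseLowerSet lam P)
    (hσ : σ ∈ levelStabilizer lam) (hne : P.image σ ≠ P) : OmLt P (P.image σ) := by
  set Q := P.image σ
  have hD : (symmDiff P Q).Nonempty := nonempty_iff_ne_empty.2 (by simpa using hne.symm)
  set m := (symmDiff P Q).min' hD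
  have hbelow : ∀ x < m, x ∈ P ↔ x ∈ Q := fun x hx => by
    by_contra h
    exact (min'_le _ x (by rw [mem_symmDiff]; tauto)).not_gt hx
  have hmD : m ∈ symmDiff P Q := min'_mem _ hD
  have hmP : m ∈ P := by
    by_contra hmP
    have hmQ : m ∈ Q.filter (lam · = lam m) := by
      rw [mem_symmDiff] at hmD; simp [hmD.resolve_left (by tauto)]
    -- `P` meets the level set of `m` only below `m`, where it agrees with `Q`, which also has `m`.
    have hsub : P.filter (lam · = lam m) ⊆ (Q.filter (lam · = lam m)).erase m := by
      intro x hx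
      rw [mem_filter] at hx
      have hxm : x < m := lt_of_not_ge fun hmx => hmP (hP m x hmx hx.2.symm hx.1)
      simp [hxm.ne, (hbelow x hxm).1 hx.1, hx.2]
    have hcount : #(Q.filter (lam · = lam m)) = #(P.filter (lam · = lam m)) :=
      card_filter_image_levelStabilizer hσ P _
    have hle := card_le_card hsub
    rw [card_erase_of_mem hmQ] at hle
    have hpos := card_pos.2 ⟨m, hmQ⟩
    omega
  refine omLt_of_mem_of_notMem (card_image_of_injective _ σ.injective).symm hmP ?_ hbelow
  rw [mem_symmDiff] at hmD; tauto

lemma sum_image_swap_lt {r s : Fin n} (hrs : r < s) (hr : r ∉ P) (hs : s ∈ P) :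
    ∑ x ∈ P.image (Equiv.swap r s), (x : ℕ) < ∑ x ∈ P, (x : ℕ) := by
  rw [sum_image fun x _ y _ h => (Equiv.swap r s).injective h]
  refine sum_lt_sum (fun x hx => ?_) ⟨s, hs, by simpa using hrs⟩
  rcases eq_or_ne x s with rfl | hxs
  · simp [hrs.le]
  · rw [Equiv.swap_apply_of_ne_of_ne (by rintro rfl; exact hr hx) hxs]

lemma swap_mem_levelStabilizer {r s : Fin n} (h : lam r = lam s) :
    Equiv.swap r s ∈ levelStabilizer lam := fun x => by
  rw [Equiv.swap_apply_def]; split_ifs <;> simp_all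

theorem exists_isFiberwiseLowerSet_image_eq (lam : Fin n → ℕ) (Q : Finset (Fin n)) :
    ∃ P, IsFiberwiseLowerSet lam P ∧ ∃ σ ∈ levelStabilizer lam, P.image σ = Q := by
  obtain ⟨σ, hσ, hmin⟩ := (univ.filter (· ∈ levelStabilizer lam)).exists_min_image
    (fun σ => ∑ x ∈ Q.image σ, (x : ℕ)) ⟨1, by simp [one_mem]⟩
  simp only [mem_filter, mem_univ, true_and] at hσ hmin
  refine ⟨Q.image σ, fun r s hrs hv hs => ?_, σ⁻¹, inv_mem hσ, by simp [image_image]⟩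
  by_contra hr
  have hle := hmin _ (mul_mem (swap_mem_levelStabilizer hv) hσ)
  rw [Equiv.Perm.coe_mul, ← image_image] at hle
  exact hle.not_gt (sum_image_swap_lt (hrs.lt_of_ne (by rintro rfl; exact hr hs)) hr hs)

theorem eq_of_isFiberwiseLowerSet_of_image_eq (hP : IsFiberwiseLowerSet lam P)
    (hQ : IsFiberwiseLowerSet lam Q) (hσ : σ ∈ levelStabilizer lam) (himg : P.image σ = Q) :
    P = Q := by
  by_contra hne
  have himg' : Q.image ⇑σ⁻¹ = P := by simp [← himg, image_image]
  have hPQ := omLt_image_of_isFiberwiseLowerSet hP hσ (himg ▸ Ne.symm hne)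
  have hQP := omLt_image_of_isFiberwiseLowerSet hQ (inv_mem hσ) (himg' ▸ hne)
  rw [himg] at hPQ
  rw [himg'] at hQP
  exact _root_.asymm (r := List.Lex (· < ·)) hPQ hQP

end

theorem stmt12_general (n c : ℕ) (lam : Fin n → ℕ)
    (hlam : IsPtn lam) :
    -- (i)
    (∀ P : Finset (Fin n), P.card = c → IsPtn (fun r => lam r + epsOf P r) →
      ∀ σ : Equiv.Perm (Fin n), permAct σ lam = lam →
        P.image σ ≠ P → OmLt P (P.image σ)) ∧
    -- (ii)
    (∀ Q : Finset (Fin n), Q.card = c →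
      ∃! P : Finset (Fin n),
        (P.card = c ∧ IsPtn (fun r => lam r + epsOf P r)) ∧
        ∃ σ : Equiv.Perm (Fin n), permAct σ lam = lam ∧ P.image σ = Q) := by
  refine ⟨fun P _ hP σ hσ hne => omLt_image_of_isFiberwiseLowerSet
    (isFiberwiseLowerSet_of_isPtn_add_epsOf hP) (permAct_eq_self_iff.1 hσ) hne, fun Q hQ => ?_⟩
  obtain ⟨P, hP, σ, hσ, rfl⟩ := exists_isFiberwiseLowerSet_image_eq lam Q
  rw [card_image_of_injective _ σ.injective] at hQ
  refine ⟨P, ⟨⟨hQ, hlam.add_epsOf hP⟩, σ, permAct_eq_self_iff.2 hσ, rfl⟩, ?_⟩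
  rintro P' ⟨⟨-, hP'⟩, σ', hσ', himg⟩
  refine eq_of_isFiberwiseLowerSet_of_image_eq (isFiberwiseLowerSet_of_isPtn_add_epsOf hP') hP
    (mul_mem (inv_mem hσ) (permAct_eq_self_iff.1 hσ')) ?_
  rw [Equiv.Perm.coe_mul, ← image_image, himg, image_image]
  simp

/-- **Lemma on `Σ_λ`-orbits.**
Let `λ` be a partition of `d` with at most `n` parts, `c ≥ 0`,
`Ω = {P ⊆ [n] : |P| = c}`, `Σ_λ ≤ Σ_n` the stabiliser of `λ`, and
`Ω_λ = {P ∈ Ω : λ + ε_P is a partition}`.  Then: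
(i) every `P ∈ Ω_λ` is the lexicographically minimal element of its `Σ_λ`-orbit;
(ii) `Ω` is the disjoint union of the `Σ_λ`-orbits of the elements of `Ω_λ`, i.e.
every `Q ∈ Ω` lies in the `Σ_λ`-orbit of exactly one `P ∈ Ω_λ`. -/
theorem stmt12 (n d c : ℕ) (lam : Fin n → ℕ)
    (hlam : IsPtn lam) (hsize : ∑ r, lam r = d) :
    -- (i)
    (∀ P : Finset (Fin n), P.card = c → IsPtn (fun r => lam r + epsOf P r) →
      ∀ σ : Equiv.Perm (Fin n), permAct σ lam = lam →
        P.image σ ≠ P → OmLt P (P.image σ)) ∧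
    -- (ii)
    (∀ Q : Finset (Fin n), Q.card = c →
      ∃! P : Finset (Fin n),
        (P.card = c ∧ IsPtn (fun r => lam r + epsOf P r)) ∧
        ∃ σ : Equiv.Perm (Fin n), permAct σ lam = lam ∧ P.image σ = Q) :=
  stmt12_general n c lam hlam
end
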